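/- arXiv:2007.13908 — 5 statements merged into one kernel-verified Lean document; each statement's English description precedes it below -/
import Mathlib

section
/- Let ℝⁿ = ℝ^{n₁}×ℝ^{n₂}, let 𝒮_x, 𝒮_y be bases of shapes in ℝ^{n₁}, ℝ^{n₂} respectively, and let 𝒮 have the strong decomposition property with respect to {𝒮_x, 𝒮_y}. If f ∈ BMO_{𝒮_x}(ℝⁿ), then f ∈ BMO_{rec,𝒮}(ℝ^{n₁}×ℝ^{n₂}) with ‖f‖_{BMO_{rec,𝒮}} ≤ 2‖f‖_{BMO_{𝒮_x}(ℝⁿ)}; similarly, if f ∈ BMO_{𝒮_y}(ℝⁿ), then ‖f‖_{BMO_{rec,𝒮}} ≤ 2‖f‖_{BMO_{𝒮_y}(ℝⁿ)}. Hence if f ∈ BMO_{𝒮_x}(ℝⁿ) ∪ BMO_{𝒮_y}(ℝⁿ), then ‖f‖_{BMO_{rec,𝒮}} ≤ 2 min(‖f‖_{BMO_{𝒮_x}(ℝⁿ)}, ‖f‖_{BMO_{𝒮_y}(ℝⁿ)}). -/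
open MeasureTheory Set ENNReal

/-!
With `g(x,y) = f(x,y) − (f_y)_{S₁}`, the rectangular integrand is `g − (g_x)_{S₂}`, and centering
in one variable at most doubles the `L¹` norm; by Fubini, `⨍_{S₁×S₂} |g|` is an average over `y`
of the one-dimensional oscillations `⨍_{S₁} |f_y − (f_y)_{S₁}|`. For the `𝒮y` bound subtract
`(f_x)_{S₂}` instead and center in the other variable. Averages over a shape are integrals against
the normalized restriction of Lebesgue measure, which is a probability measure, and normalized
restrictions multiply over products.
-/

noncomputable section

/-- A shape: an open set of finite positive Lebesgue measure. -/
def IsShape {α : Type*} [TopologicalSpace α] [MeasureSpace α] (S : Set α) : Prop :=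
  IsOpen S ∧ 0 < volume S ∧ volume S < ⊤

/-- A basis of shapes: a collection of shapes covering the space. -/
def IsShapeBasis {α : Type*} [TopologicalSpace α] [MeasureSpace α] (𝒮 : Set (Set α)) : Prop :=
  (∀ S ∈ 𝒮, IsShape S) ∧ ⋃₀ 𝒮 = Set.univ

/-- `𝒮` has the strong decomposition property with respect to `{𝒮x, 𝒮y}`. -/
def StrongDecomposition2 {A B : Type*} (𝒮 : Set (Set (A × B)))
    (𝒮x : Set (Set A)) (𝒮y : Set (Set B)) : Prop :=
  (∀ S ∈ 𝒮, ∃ S₁ ∈ 𝒮x, ∃ S₂ ∈ 𝒮y, S = S₁ ×ˢ S₂) ∧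
  (∀ S₁ ∈ 𝒮x, ∀ S₂ ∈ 𝒮y, S₁ ×ˢ S₂ ∈ 𝒮)

/-- The rectangular BMO norm of `f` with respect to the bases `𝒮x, 𝒮y`:
`sup_{S₁ ∈ 𝒮x, S₂ ∈ 𝒮y} ⨍_{S₁} ⨍_{S₂} |f(x,y) − (f_x)_{S₂} − (f_y)_{S₁} + f_{S₁×S₂}|`. -/
def recBmoNorm {A B : Type*} [MeasureSpace A] [MeasureSpace B]
    [SigmaFinite (volume : Measure A)] [SigmaFinite (volume : Measure B)]
    (𝒮x : Set (Set A)) (𝒮y : Set (Set B)) (f : A × B → ℝ) : ℝ≥0∞ :=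
  ⨆ S₁ ∈ 𝒮x, ⨆ S₂ ∈ 𝒮y, ENNReal.ofReal
    (⨍ x in S₁, ⨍ y in S₂,
      |f (x, y) - (⨍ y' in S₂, f (x, y')) - (⨍ x' in S₁, f (x', y)) + ⨍ z in S₁ ×ˢ S₂, f z|)

/-- The uniform lower-dimensional `BMO_{𝒮x}(ℝⁿ)` norm: `sup_y sup_{S₁ ∈ 𝒮x} ⨍_{S₁} |f_y − (f_y)_{S₁}|`. -/
def bmoXNorm {A B : Type*} [MeasureSpace A]
    (𝒮x : Set (Set A)) (f : A × B → ℝ) : ℝ≥0∞ :=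
  ⨆ y : B, ⨆ S₁ ∈ 𝒮x, ENNReal.ofReal (⨍ x in S₁, |f (x, y) - ⨍ x' in S₁, f (x', y)|)

/-- The uniform lower-dimensional `BMO_{𝒮y}(ℝⁿ)` norm: `sup_x sup_{S₂ ∈ 𝒮y} ⨍_{S₂} |f_x − (f_x)_{S₂}|`. -/
def bmoYNorm {A B : Type*} [MeasureSpace B]
    (𝒮y : Set (Set B)) (f : A × B → ℝ) : ℝ≥0∞ :=
  ⨆ x : A, ⨆ S₂ ∈ 𝒮y, ENNReal.ofReal (⨍ y in S₂, |f (x, y) - ⨍ y' in S₂, f (x, y')|)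

open ProbabilityTheory

section Probability

variable {A B : Type*} [MeasurableSpace A] [MeasurableSpace B]
  {μ : Measure A} {ν : Measure B} [IsProbabilityMeasure μ] [IsProbabilityMeasure ν]

lemma integral_le_of_nonneg_of_le {h : A → ℝ} {m : ℝ} (h0 : ∀ x, 0 ≤ h x) (hm : ∀ x, h x ≤ m) :
    ∫ x, h x ∂μ ≤ m := by
  simpa using integral_mono_of_nonneg (.of_forall h0) (integrable_const (μ := μ) m) (.of_forall hm)

lemma integral_abs_sub_integral_le {h : A → ℝ} (hh : Integrable h μ) :
    ∫ x, |h x - ∫ x', h x' ∂μ| ∂μ ≤ 2 * ∫ x, |h x| ∂μ := by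
  calc ∫ x, |h x - ∫ x', h x' ∂μ| ∂μ ≤ ∫ x, (|h x| + |∫ x', h x' ∂μ|) ∂μ :=
        integral_mono (hh.sub (integrable_const _)).abs (hh.abs.add (integrable_const _))
          fun x => abs_sub _ _
    _ = ∫ x, |h x| ∂μ + |∫ x', h x' ∂μ| := by
        rw [integral_add hh.abs (integrable_const _), integral_const, probReal_univ, one_smul]
    _ ≤ 2 * ∫ x, |h x| ∂μ := by linarith [abs_integral_le_integral_abs (f := h) (μ := μ)]

lemma integral_integral_abs_sub_integral_right_le {g : A × B → ℝ} (hg : Integrable g (μ.prod ν)) :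
    ∫ x, ∫ y, |g (x, y) - ∫ y', g (x, y') ∂ν| ∂ν ∂μ ≤ 2 * ∫ z, |g z| ∂(μ.prod ν) := by
  have hx : ∀ᵐ x ∂μ, ∫ y, |g (x, y) - ∫ y', g (x, y') ∂ν| ∂ν ≤ 2 * ∫ y, |g (x, y)| ∂ν := by
    filter_upwards [hg.prod_right_ae] with x hgx
    exact integral_abs_sub_integral_le hgx
  calc ∫ x, ∫ y, |g (x, y) - ∫ y', g (x, y') ∂ν| ∂ν ∂μ ≤ ∫ x, 2 * ∫ y, |g (x, y)| ∂ν ∂μ :=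
        integral_mono_of_nonneg (.of_forall fun x => integral_nonneg fun y => abs_nonneg _)
          (hg.abs.integral_prod_left.const_mul 2) hx
    _ = 2 * ∫ z, |g z| ∂(μ.prod ν) := by rw [integral_const_mul, integral_prod _ hg.abs]

lemma integral_integral_abs_sub_integral_left_le {g : A × B → ℝ} (hg : Integrable g (μ.prod ν)) :
    ∫ x, ∫ y, |g (x, y) - ∫ x', g (x', y) ∂μ| ∂ν ∂μ ≤ 2 * ∫ z, |g z| ∂(μ.prod ν) := by
  have hdiff : Integrable (fun z : A × B => |g z - ∫ x', g (x', z.2) ∂μ|) (μ.prod ν) :=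
    (hg.sub (hg.integral_prod_right.comp_snd μ)).abs
  rw [integral_integral_swap hdiff, ← integral_prod_swap]
  exact integral_integral_abs_sub_integral_right_le hg.swap

def rectDiff (μ : Measure A) (ν : Measure B) (f : A × B → ℝ) (x : A) (y : B) : ℝ :=
  f (x, y) - (∫ y', f (x, y') ∂ν) - (∫ x', f (x', y) ∂μ) + ∫ z, f z ∂(μ.prod ν)

lemma rectDiff_eq_sub_integral_right {f : A × B → ℝ} (hf : Integrable f (μ.prod ν)) {x : A}
    (hfx : Integrable (fun y => f (x, y)) ν) (y : B) :
    rectDiff μ ν f x y = (f (x, y) - ∫ x', f (x', y) ∂μ) -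
      ∫ y', (f (x, y') - ∫ x', f (x', y') ∂μ) ∂ν := by
  rw [rectDiff, integral_sub hfx hf.integral_prod_right, integral_prod_symm f hf]
  ring

lemma rectDiff_eq_sub_integral_left {f : A × B → ℝ} (hf : Integrable f (μ.prod ν)) (x : A) {y : B}
    (hfy : Integrable (fun x => f (x, y)) μ) :
    rectDiff μ ν f x y = (f (x, y) - ∫ y', f (x, y') ∂ν) -
      ∫ x', (f (x', y) - ∫ y', f (x', y') ∂ν) ∂μ := by
  rw [rectDiff, integral_sub hfy hf.integral_prod_left, ← integral_prod f hf]
  ring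

theorem integral_integral_abs_rectDiff_le_of_left {f : A × B → ℝ} (hf : Integrable f (μ.prod ν))
    {m : ℝ} (hm : ∀ y, ∫ x, |f (x, y) - ∫ x', f (x', y) ∂μ| ∂μ ≤ m) :
    ∫ x, ∫ y, |rectDiff μ ν f x y| ∂ν ∂μ ≤ 2 * m := by
  set g : A × B → ℝ := fun z => f z - ∫ x', f (x', z.2) ∂μ
  have hg : Integrable g (μ.prod ν) := hf.sub (hf.integral_prod_right.comp_snd μ)
  calc ∫ x, ∫ y, |rectDiff μ ν f x y| ∂ν ∂μ
        = ∫ x, ∫ y, |g (x, y) - ∫ y', g (x, y') ∂ν| ∂ν ∂μ := by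
        refine integral_congr_ae ?_
        filter_upwards [hf.prod_right_ae] with x hfx
        simp only [rectDiff_eq_sub_integral_right hf hfx, g]
    _ ≤ 2 * ∫ z, |g z| ∂(μ.prod ν) := integral_integral_abs_sub_integral_right_le hg
    _ = 2 * ∫ y, ∫ x, |g (x, y)| ∂μ ∂ν := by rw [integral_prod_symm _ hg.abs]
    _ ≤ 2 * m := by
        gcongr
        exact integral_le_of_nonneg_of_le (fun y => integral_nonneg fun x => abs_nonneg _) hm

theorem integral_integral_abs_rectDiff_le_of_right {f : A × B → ℝ} (hf : Integrable f (μ.prod ν))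
    {m : ℝ} (hm : ∀ x, ∫ y, |f (x, y) - ∫ y', f (x, y') ∂ν| ∂ν ≤ m) :
    ∫ x, ∫ y, |rectDiff μ ν f x y| ∂ν ∂μ ≤ 2 * m := by
  set g : A × B → ℝ := fun z => f z - ∫ y', f (z.1, y') ∂ν
  have hg : Integrable g (μ.prod ν) := hf.sub (hf.integral_prod_left.comp_fst ν)
  calc ∫ x, ∫ y, |rectDiff μ ν f x y| ∂ν ∂μ
        = ∫ x, ∫ y, |g (x, y) - ∫ x', g (x', y) ∂μ| ∂ν ∂μ := by
        refine integral_congr_ae (.of_forall fun x => integral_congr_ae ?_)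
        filter_upwards [hf.prod_left_ae] with y hfy
        simp only [rectDiff_eq_sub_integral_left hf x hfy, g]
    _ ≤ 2 * ∫ z, |g z| ∂(μ.prod ν) := integral_integral_abs_sub_integral_left_le hg
    _ = 2 * ∫ x, ∫ y, |g (x, y)| ∂ν ∂μ := by rw [integral_prod _ hg.abs]
    _ ≤ 2 * m := by
        gcongr
        exact integral_le_of_nonneg_of_le (fun x => integral_nonneg fun y => abs_nonneg _) hm

end Probability

lemma cond_prod_cond {A B : Type*} [MeasurableSpace A] [MeasurableSpace B] {μ : Measure A}
    {ν : Measure B} [SFinite μ] [SFinite ν] {s : Set A} {t : Set B} (hs : μ s ≠ 0)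
    (hs' : μ s ≠ ∞) : (μ[|s]).prod (ν[|t]) = (μ.prod ν)[|s ×ˢ t] := by
  simp only [ProbabilityTheory.cond]
  rw [Measure.prod_smul_left, Measure.prod_smul_right, smul_smul, Measure.prod_restrict,
    Measure.prod_prod, ENNReal.mul_inv (.inl hs) (.inl hs')]

lemma ofReal_le_two_mul_of_ne_top {r : ℝ} {M : ℝ≥0∞} (h : M ≠ ∞ → r ≤ 2 * M.toReal) :
    ENNReal.ofReal r ≤ 2 * M := by
  rcases eq_or_ne M ∞ with rfl | hM
  · simp
  rw [ENNReal.ofReal_le_iff_le_toReal (ENNReal.mul_ne_top ENNReal.ofNat_ne_top hM),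
    ENNReal.toReal_mul, ENNReal.toReal_ofNat]
  exact h hM

lemma setAverage_eq_integral_cond {α : Type*} [MeasurableSpace α] {μ : Measure α} (f : α → ℝ)
    (s : Set α) : ⨍ x in s, f x ∂μ = ∫ x, f x ∂μ[|s] :=
  setAverage_eq' μ f s

section Average

variable {A B : Type*} [MeasureSpace A] [MeasureSpace B]
  [SigmaFinite (volume : Measure A)] [SigmaFinite (volume : Measure B)]
  {S₁ : Set A} {S₂ : Set B} {f : A × B → ℝ} {M : ℝ≥0∞}

lemma integrable_prod_cond (h₁ : volume S₁ ≠ 0) (h₁' : volume S₁ ≠ ∞) (h₂ : volume S₂ ≠ 0)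
    (hf : IntegrableOn f (S₁ ×ˢ S₂)) : Integrable f ((volume[|S₁]).prod (volume[|S₂])) := by
  rw [cond_prod_cond h₁ h₁']
  refine hf.smul_measure (ENNReal.inv_ne_top.2 ?_)
  rw [Measure.prod_prod]
  exact mul_ne_zero h₁ h₂

lemma ofReal_setAverage_rect_le_of_left (h₁ : volume S₁ ≠ 0) (h₁' : volume S₁ ≠ ∞)
    (h₂ : volume S₂ ≠ 0) (h₂' : volume S₂ ≠ ∞) (hf : IntegrableOn f (S₁ ×ˢ S₂))
    (hM : ∀ y, ENNReal.ofReal (⨍ x in S₁, |f (x, y) - ⨍ x' in S₁, f (x', y)|) ≤ M) :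
    ENNReal.ofReal (⨍ x in S₁, ⨍ y in S₂,
      |f (x, y) - (⨍ y' in S₂, f (x, y')) - (⨍ x' in S₁, f (x', y)) + ⨍ z in S₁ ×ˢ S₂, f z|)
      ≤ 2 * M := by
  refine ofReal_le_two_mul_of_ne_top fun hM_top => ?_
  have := cond_isProbabilityMeasure_of_finite h₁ h₁'
  have := cond_isProbabilityMeasure_of_finite h₂ h₂'
  simp only [setAverage_eq_integral_cond, Measure.volume_eq_prod, ← cond_prod_cond h₁ h₁']
    at hM ⊢
  exact integral_integral_abs_rectDiff_le_of_left (integrable_prod_cond h₁ h₁' h₂ hf)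
    fun y => (ENNReal.ofReal_le_iff_le_toReal hM_top).1 (hM y)

lemma ofReal_setAverage_rect_le_of_right (h₁ : volume S₁ ≠ 0) (h₁' : volume S₁ ≠ ∞)
    (h₂ : volume S₂ ≠ 0) (h₂' : volume S₂ ≠ ∞) (hf : IntegrableOn f (S₁ ×ˢ S₂))
    (hM : ∀ x, ENNReal.ofReal (⨍ y in S₂, |f (x, y) - ⨍ y' in S₂, f (x, y')|) ≤ M) :
    ENNReal.ofReal (⨍ x in S₁, ⨍ y in S₂,
      |f (x, y) - (⨍ y' in S₂, f (x, y')) - (⨍ x' in S₁, f (x', y)) + ⨍ z in S₁ ×ˢ S₂, f z|)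
      ≤ 2 * M := by
  refine ofReal_le_two_mul_of_ne_top fun hM_top => ?_
  have := cond_isProbabilityMeasure_of_finite h₁ h₁'
  have := cond_isProbabilityMeasure_of_finite h₂ h₂'
  simp only [setAverage_eq_integral_cond, Measure.volume_eq_prod, ← cond_prod_cond h₁ h₁']
    at hM ⊢
  exact integral_integral_abs_rectDiff_le_of_right (integrable_prod_cond h₁ h₁' h₂ hf)
    fun x => (ENNReal.ofReal_le_iff_le_toReal hM_top).1 (hM x)

end Average

theorem lower_dim_bmo_subset_rec_bmo_general {n₁ n₂ : ℕ}
    (𝒮 : Set (Set ((Fin n₁ → ℝ) × (Fin n₂ → ℝ))))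
    (𝒮x : Set (Set (Fin n₁ → ℝ))) (𝒮y : Set (Set (Fin n₂ → ℝ)))
    (h𝒮x : IsShapeBasis 𝒮x) (h𝒮y : IsShapeBasis 𝒮y)
    (hdec : StrongDecomposition2 𝒮 𝒮x 𝒮y)
    (f : (Fin n₁ → ℝ) × (Fin n₂ → ℝ) → ℝ)
    (hfi : ∀ S ∈ 𝒮, IntegrableOn f S) :
    (bmoXNorm 𝒮x f < ⊤ →
      recBmoNorm 𝒮x 𝒮y f < ⊤ ∧ recBmoNorm 𝒮x 𝒮y f ≤ 2 * bmoXNorm 𝒮x f) ∧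
    (bmoYNorm 𝒮y f < ⊤ →
      recBmoNorm 𝒮x 𝒮y f < ⊤ ∧ recBmoNorm 𝒮x 𝒮y f ≤ 2 * bmoYNorm 𝒮y f) ∧
    (bmoXNorm 𝒮x f < ⊤ ∨ bmoYNorm 𝒮y f < ⊤ →
      recBmoNorm 𝒮x 𝒮y f ≤ 2 * min (bmoXNorm 𝒮x f) (bmoYNorm 𝒮y f)) := by
  have hX : recBmoNorm 𝒮x 𝒮y f ≤ 2 * bmoXNorm 𝒮x f := by
    refine iSup₂_le fun S₁ hS₁ => iSup₂_le fun S₂ hS₂ => ?_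
    obtain ⟨-, h₁, h₁'⟩ := h𝒮x.1 S₁ hS₁
    obtain ⟨-, h₂, h₂'⟩ := h𝒮y.1 S₂ hS₂
    exact ofReal_setAverage_rect_le_of_left h₁.ne' h₁'.ne h₂.ne' h₂'.ne
      (hfi _ (hdec.2 S₁ hS₁ S₂ hS₂))
      fun y => le_iSup_of_le y (le_iSup₂_of_le S₁ hS₁ le_rfl)
  have hY : recBmoNorm 𝒮x 𝒮y f ≤ 2 * bmoYNorm 𝒮y f := by
    refine iSup₂_le fun S₁ hS₁ => iSup₂_le fun S₂ hS₂ => ?_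
    obtain ⟨-, h₁, h₁'⟩ := h𝒮x.1 S₁ hS₁
    obtain ⟨-, h₂, h₂'⟩ := h𝒮y.1 S₂ hS₂
    exact ofReal_setAverage_rect_le_of_right h₁.ne' h₁'.ne h₂.ne' h₂'.ne
      (hfi _ (hdec.2 S₁ hS₁ S₂ hS₂))
      fun x => le_iSup_of_le x (le_iSup₂_of_le S₂ hS₂ le_rfl)
  refine ⟨fun hXfin => ⟨hX.trans_lt (ENNReal.mul_lt_top ENNReal.ofNat_lt_top hXfin), hX⟩,
    fun hYfin => ⟨hY.trans_lt (ENNReal.mul_lt_top ENNReal.ofNat_lt_top hYfin), hY⟩, fun _ => ?_⟩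
  rw [mul_min]
  exact le_min hX hY

/-- Let `ℝⁿ = ℝ^{n₁}×ℝ^{n₂}` and let `𝒮` have the strong decomposition
property with respect to bases `𝒮x, 𝒮y` of shapes. If `f ∈ BMO_{𝒮x}(ℝⁿ)`, then
`f ∈ BMO_{rec,𝒮}` with `‖f‖_{BMO_{rec,𝒮}} ≤ 2‖f‖_{BMO_{𝒮x}(ℝⁿ)}`; similarly for `𝒮y`. Hence
if `f ∈ BMO_{𝒮x}(ℝⁿ) ∪ BMO_{𝒮y}(ℝⁿ)`, then
`‖f‖_{BMO_{rec,𝒮}} ≤ 2 min (‖f‖_{BMO_{𝒮x}}, ‖f‖_{BMO_{𝒮y}})`. -/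
theorem lower_dim_bmo_subset_rec_bmo {n₁ n₂ : ℕ}
    (𝒮 : Set (Set ((Fin n₁ → ℝ) × (Fin n₂ → ℝ))))
    (𝒮x : Set (Set (Fin n₁ → ℝ))) (𝒮y : Set (Set (Fin n₂ → ℝ)))
    (h𝒮 : IsShapeBasis 𝒮) (h𝒮x : IsShapeBasis 𝒮x) (h𝒮y : IsShapeBasis 𝒮y)
    (hdec : StrongDecomposition2 𝒮 𝒮x 𝒮y)
    (f : (Fin n₁ → ℝ) × (Fin n₂ → ℝ) → ℝ) (hfm : Measurable f)
    (hfi : ∀ S ∈ 𝒮, IntegrableOn f S)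
    (hfx : ∀ (x : Fin n₁ → ℝ), ∀ S₂ ∈ 𝒮y, IntegrableOn (fun y => f (x, y)) S₂)
    (hfy : ∀ (y : Fin n₂ → ℝ), ∀ S₁ ∈ 𝒮x, IntegrableOn (fun x => f (x, y)) S₁) :
    (bmoXNorm 𝒮x f < ⊤ →
      recBmoNorm 𝒮x 𝒮y f < ⊤ ∧ recBmoNorm 𝒮x 𝒮y f ≤ 2 * bmoXNorm 𝒮x f) ∧
    (bmoYNorm 𝒮y f < ⊤ →
      recBmoNorm 𝒮x 𝒮y f < ⊤ ∧ recBmoNorm 𝒮x 𝒮y f ≤ 2 * bmoYNorm 𝒮y f) ∧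
    (bmoXNorm 𝒮x f < ⊤ ∨ bmoYNorm 𝒮y f < ⊤ →
      recBmoNorm 𝒮x 𝒮y f ≤ 2 * min (bmoXNorm 𝒮x f) (bmoYNorm 𝒮y f)) :=
  lower_dim_bmo_subset_rec_bmo_general 𝒮 𝒮x 𝒮y h𝒮x h𝒮y hdec f hfi
end
end

section
/- Let ℝⁿ = ℝ^{n₁}×ℝ^{n₂}, let 𝒮_x, 𝒮_y be bases of shapes in ℝ^{n₁}, ℝ^{n₂} respectively, and let 𝒮 have the strong decomposition property with respect to {𝒮_x, 𝒮_y}. If f ∈ BMO_𝒮(ℝⁿ), then f ∈ BMO_{rec,𝒮}(ℝ^{n₁}×ℝ^{n₂}) with ‖f‖_{BMO_{rec,𝒮}} ≤ 3‖f‖_{BMO_𝒮}. -/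
open MeasureTheory Set ENNReal

noncomputable section

/-- The BMO norm of `f` with respect to the basis `𝒮`. -/
def bmoNorm {α : Type*} [MeasureSpace α] (𝒮 : Set (Set α)) (f : α → ℝ) : ℝ≥0∞ :=
  ⨆ S ∈ 𝒮, ENNReal.ofReal (⨍ z in S, |f z - ⨍ w in S, f w|)


/-! Write `g = f - f_{S₁×S₂}`. Then `f - (f_x)_{S₂} - (f_y)_{S₁} + f_{S₁×S₂}` equals
`g - (g_x)_{S₂} - (g_y)_{S₁}`, and each of these three terms has average absolute value at most
`⨍_{S₁×S₂} |g|`: the first by Fubini, the other two because averaging out one variable does not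
increase the `L¹` norm. Averages over `S₁`, `S₂` are integrals against the normalized restricted
measures, which are probability measures whose product is the normalized measure on `S₁ × S₂`. -/

namespace MeasureTheory

variable {α β : Type*} [MeasurableSpace α] [MeasurableSpace β] {μ : Measure α} {ν : Measure β}

theorem integral_abs_integral_prod_left_le [SFinite μ] [SFinite ν] {g : α × β → ℝ}
    (hg : Integrable g (μ.prod ν)) :
    ∫ x, |∫ y, g (x, y) ∂ν| ∂μ ≤ ∫ z, |g z| ∂μ.prod ν :=
  calc ∫ x, |∫ y, g (x, y) ∂ν| ∂μ ≤ ∫ x, ∫ y, |g (x, y)| ∂ν ∂μ :=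
        integral_mono_of_nonneg (.of_forall fun _ => abs_nonneg _)
          (by simpa only [Real.norm_eq_abs] using hg.integral_norm_prod_left)
          (.of_forall fun _ => abs_integral_le_integral_abs)
    _ = ∫ z, |g z| ∂μ.prod ν := (integral_prod _ hg.abs).symm

theorem integral_abs_integral_prod_right_le [SFinite μ] [SFinite ν] {g : α × β → ℝ}
    (hg : Integrable g (μ.prod ν)) :
    ∫ y, |∫ x, g (x, y) ∂μ| ∂ν ≤ ∫ z, |g z| ∂μ.prod ν :=
  calc ∫ y, |∫ x, g (x, y) ∂μ| ∂ν ≤ ∫ y, ∫ x, |g (x, y)| ∂μ ∂ν :=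
        integral_mono_of_nonneg (.of_forall fun _ => abs_nonneg _)
          (by simpa only [Real.norm_eq_abs] using hg.integral_norm_prod_right)
          (.of_forall fun _ => abs_integral_le_integral_abs)
    _ = ∫ z, |g z| ∂μ.prod ν := (integral_prod_symm _ hg.abs).symm

section Probability

variable [IsProbabilityMeasure μ] [IsProbabilityMeasure ν]

theorem integral_abs_sub_marginals_le {g : α × β → ℝ} (hg : Integrable g (μ.prod ν)) :
    ∫ x, ∫ y, |g (x, y) - ∫ y', g (x, y') ∂ν - ∫ x', g (x', y) ∂μ| ∂ν ∂μ
      ≤ 3 * ∫ z, |g z| ∂μ.prod ν := by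
  set u : α → ℝ := fun x => ∫ y, g (x, y) ∂ν
  set v : β → ℝ := fun y => ∫ x, g (x, y) ∂μ
  have hu : Integrable (fun z : α × β => u z.1) (μ.prod ν) := hg.integral_prod_left.comp_fst ν
  have hv : Integrable (fun z : α × β => v z.2) (μ.prod ν) := hg.integral_prod_right.comp_snd μ
  rw [← integral_prod (fun z => |g z - u z.1 - v z.2|) ((hg.sub hu).sub hv).abs]
  calc ∫ z, |g z - u z.1 - v z.2| ∂μ.prod ν
      ≤ ∫ z, (|g z| + |u z.1| + |v z.2|) ∂μ.prod ν :=
        integral_mono (((hg.sub hu).sub hv).abs) ((hg.abs.add hu.abs).add hv.abs)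
          fun z => (abs_sub _ _).trans (add_le_add_left (abs_sub _ _) _)
    _ = ∫ z, |g z| ∂μ.prod ν + ∫ x, |u x| ∂μ + ∫ y, |v y| ∂ν := by
        rw [integral_add _ hv.abs, integral_add hg.abs hu.abs, integral_fun_fst (fun x => |u x|),
          integral_fun_snd (fun y => |v y|), probReal_univ, probReal_univ, one_smul, one_smul]
        exact hg.abs.add hu.abs
    _ ≤ 3 * ∫ z, |g z| ∂μ.prod ν := by
        linarith [integral_abs_integral_prod_left_le hg, integral_abs_integral_prod_right_le hg]

theorem integral_abs_rectangular_oscillation_le {f : α × β → ℝ} (hf : Integrable f (μ.prod ν)) :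
    ∫ x, ∫ y, |f (x, y) - ∫ y', f (x, y') ∂ν - ∫ x', f (x', y) ∂μ + ∫ z, f z ∂μ.prod ν| ∂ν ∂μ
      ≤ 3 * ∫ z, |f z - ∫ w, f w ∂μ.prod ν| ∂μ.prod ν := by
  set m := ∫ z, f z ∂μ.prod ν
  -- `m` comes out of a fibre integral only for integrable fibres, i.e. almost every fibre.
  refine le_of_eq_of_le (integral_congr_ae ?_)
    (integral_abs_sub_marginals_le (hf.sub (integrable_const m)))
  filter_upwards [hf.prod_right_ae] with x hx
  refine integral_congr_ae ?_
  filter_upwards [hf.prod_left_ae] with y hy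
  simp only [integral_sub hx (integrable_const m), integral_sub hy (integrable_const m),
    integral_const, probReal_univ, one_smul]
  congr 1; ring

end Probability

theorem Measure.inv_measure_univ_smul_prod [IsFiniteMeasure μ] [IsFiniteMeasure ν] :
    ((μ.prod ν) univ)⁻¹ • μ.prod ν = ((μ univ)⁻¹ • μ).prod ((ν univ)⁻¹ • ν) := by
  rw [Measure.prod_smul_left, Measure.prod_smul_right, smul_smul, ← univ_prod_univ,
    Measure.prod_prod,
    ENNReal.mul_inv (.inr (measure_ne_top ν univ)) (.inl (measure_ne_top μ univ)), mul_comm]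

theorem average_abs_rectangular_oscillation_le [IsFiniteMeasure μ] [NeZero μ]
    [IsFiniteMeasure ν] [NeZero ν] {f : α × β → ℝ} (hf : Integrable f (μ.prod ν)) :
    ⨍ x, ⨍ y, |f (x, y) - ⨍ y', f (x, y') ∂ν - ⨍ x', f (x', y) ∂μ + ⨍ z, f z ∂μ.prod ν| ∂ν ∂μ
      ≤ 3 * ⨍ z, |f z - ⨍ w, f w ∂μ.prod ν| ∂μ.prod ν := by
  have hf' : Integrable f (((μ univ)⁻¹ • μ).prod ((ν univ)⁻¹ • ν)) := by
    rw [Measure.prod_smul_left, Measure.prod_smul_right]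
    exact (hf.smul_measure (ENNReal.inv_ne_top.2 (NeZero.ne _))).smul_measure
      (ENNReal.inv_ne_top.2 (NeZero.ne _))
  simp only [average, Measure.inv_measure_univ_smul_prod]
  exact integral_abs_rectangular_oscillation_le hf'

end MeasureTheory

theorem setAverage_abs_rectangular_oscillation_le {A B : Type*} [MeasureSpace A] [MeasureSpace B]
    [SFinite (volume : Measure A)] [SFinite (volume : Measure B)] {S₁ : Set A} {S₂ : Set B}
    (h₁ : volume S₁ ≠ 0) (h₁' : volume S₁ ≠ ⊤) (h₂ : volume S₂ ≠ 0) (h₂' : volume S₂ ≠ ⊤)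
    {f : A × B → ℝ} (hf : IntegrableOn f (S₁ ×ˢ S₂)) :
    ⨍ x in S₁, ⨍ y in S₂,
        |f (x, y) - (⨍ y' in S₂, f (x, y')) - (⨍ x' in S₁, f (x', y)) + ⨍ z in S₁ ×ˢ S₂, f z|
      ≤ 3 * ⨍ z in S₁ ×ˢ S₂, |f z - ⨍ w in S₁ ×ˢ S₂, f w| := by
  have : IsFiniteMeasure (volume.restrict S₁) := isFiniteMeasure_restrict.2 h₁'
  have : IsFiniteMeasure (volume.restrict S₂) := isFiniteMeasure_restrict.2 h₂'
  have : NeZero (volume.restrict S₁) := ⟨Measure.restrict_eq_zero.not.2 h₁⟩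
  have : NeZero (volume.restrict S₂) := ⟨Measure.restrict_eq_zero.not.2 h₂⟩
  rw [IntegrableOn, Measure.volume_eq_prod, ← Measure.prod_restrict] at hf
  rw [Measure.volume_eq_prod, ← Measure.prod_restrict]
  exact average_abs_rectangular_oscillation_le hf

theorem strong_bmo_subset_rec_bmo_general {n₁ n₂ : ℕ}
    (𝒮 : Set (Set ((Fin n₁ → ℝ) × (Fin n₂ → ℝ))))
    (𝒮x : Set (Set (Fin n₁ → ℝ))) (𝒮y : Set (Set (Fin n₂ → ℝ)))
    (h𝒮x : IsShapeBasis 𝒮x) (h𝒮y : IsShapeBasis 𝒮y)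
    (hdec : StrongDecomposition2 𝒮 𝒮x 𝒮y)
    (f : (Fin n₁ → ℝ) × (Fin n₂ → ℝ) → ℝ)
    (hfi : ∀ S ∈ 𝒮, IntegrableOn f S)
    (hf : bmoNorm 𝒮 f < ⊤) :
    recBmoNorm 𝒮x 𝒮y f < ⊤ ∧ recBmoNorm 𝒮x 𝒮y f ≤ 3 * bmoNorm 𝒮 f := by
  have hle : recBmoNorm 𝒮x 𝒮y f ≤ 3 * bmoNorm 𝒮 f := by
    refine iSup₂_le fun S₁ hS₁ => iSup₂_le fun S₂ hS₂ => ?_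
    obtain ⟨-, h₁, h₁'⟩ := h𝒮x.1 S₁ hS₁
    obtain ⟨-, h₂, h₂'⟩ := h𝒮y.1 S₂ hS₂
    have hS : S₁ ×ˢ S₂ ∈ 𝒮 := hdec.2 S₁ hS₁ S₂ hS₂
    refine (ENNReal.ofReal_le_ofReal (setAverage_abs_rectangular_oscillation_le h₁.ne' h₁'.ne
      h₂.ne' h₂'.ne (hfi _ hS))).trans ?_
    rw [ENNReal.ofReal_mul zero_le_three, ENNReal.ofReal_ofNat]
    gcongr
    exact le_iSup₂ (f := fun S (_ : S ∈ 𝒮) => ENNReal.ofReal (⨍ z in S, |f z - ⨍ w in S, f w|))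
      _ hS
  exact ⟨hle.trans_lt (ENNReal.mul_lt_top ENNReal.ofNat_lt_top hf), hle⟩

/-- Let `ℝⁿ = ℝ^{n₁}×ℝ^{n₂}` and let `𝒮` have the strong decomposition
property with respect to bases `𝒮x, 𝒮y` of shapes. If `f ∈ BMO_𝒮(ℝⁿ)`, then
`f ∈ BMO_{rec,𝒮}(ℝ^{n₁}×ℝ^{n₂})` with `‖f‖_{BMO_{rec,𝒮}} ≤ 3‖f‖_{BMO_𝒮}`. -/
theorem strong_bmo_subset_rec_bmo {n₁ n₂ : ℕ}
    (𝒮 : Set (Set ((Fin n₁ → ℝ) × (Fin n₂ → ℝ))))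
    (𝒮x : Set (Set (Fin n₁ → ℝ))) (𝒮y : Set (Set (Fin n₂ → ℝ)))
    (h𝒮 : IsShapeBasis 𝒮) (h𝒮x : IsShapeBasis 𝒮x) (h𝒮y : IsShapeBasis 𝒮y)
    (hdec : StrongDecomposition2 𝒮 𝒮x 𝒮y)
    (f : (Fin n₁ → ℝ) × (Fin n₂ → ℝ) → ℝ) (hfm : Measurable f)
    (hfi : ∀ S ∈ 𝒮, IntegrableOn f S)
    (hfx : ∀ (x : Fin n₁ → ℝ), ∀ S₂ ∈ 𝒮y, IntegrableOn (fun y => f (x, y)) S₂)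
    (hfy : ∀ (y : Fin n₂ → ℝ), ∀ S₁ ∈ 𝒮x, IntegrableOn (fun x => f (x, y)) S₁)
    (hf : bmoNorm 𝒮 f < ⊤) :
    recBmoNorm 𝒮x 𝒮y f < ⊤ ∧ recBmoNorm 𝒮x 𝒮y f ≤ 3 * bmoNorm 𝒮 f :=
  strong_bmo_subset_rec_bmo_general 𝒮 𝒮x 𝒮y h𝒮x h𝒮y hdec f hfi hf
end
end

section
/- Write ℝⁿ = ℝ^{n₁}×⋯×ℝ^{n_k} and let 𝒮 have the strong decomposition property with respect to bases 𝒮ᵢ in ℝ^{nᵢ}. If f ∈ BLO_{𝒮ᵢ}(ℝⁿ) for some 1 ≤ i ≤ k, then f ∈ BLO_{rec,𝒮}(ℝ^{n₁}×⋯×ℝ^{n_k}) with ‖f‖_{BLO_{rec,𝒮}} ≤ ‖f‖_{BLO_{𝒮ᵢ}(ℝⁿ)}. Consequently, if f ∈ ⋃_{i=1}^{k} BLO_{𝒮ᵢ}(ℝⁿ), then ‖f‖_{BLO_{rec,𝒮}} ≤ min_{1≤i≤k} ‖f‖_{BLO_{𝒮ᵢ}(ℝⁿ)}. -/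
open MeasureTheory Set ENNReal

noncomputable section

/-- `𝒮` satisfies the strong decomposition property with respect to the bases `𝒮ᵢ`. -/
def StrongDecomposition {k : ℕ} {n : Fin k → ℕ} (𝒮 : Set (Set (∀ j, Fin (n j) → ℝ)))
    (𝒮i : ∀ i, Set (Set (Fin (n i) → ℝ))) : Prop :=
  (∀ S ∈ 𝒮, ∃ T : ∀ i, Set (Fin (n i) → ℝ), (∀ i, T i ∈ 𝒮i i) ∧ S = Set.univ.pi T) ∧
  (∀ T : ∀ i, Set (Fin (n i) → ℝ), (∀ i, T i ∈ 𝒮i i) → Set.univ.pi T ∈ 𝒮)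

/-- The rectangular BLO norm: the supremum over product shapes `S = S₁×⋯×S_k` (with
`Sᵢ ∈ 𝒮ᵢ`) of `⨍_S [f(z) − max_{1≤i≤k} essinf_{Sᵢ} f_{ẑᵢ}] dz`, where `f_{ẑᵢ}` is the
slice of `f` in the `i`-th block through `z`. -/
def recBloNorm {k : ℕ} {n : Fin k → ℕ} (𝒮i : ∀ i, Set (Set (Fin (n i) → ℝ)))
    (f : (∀ j, Fin (n j) → ℝ) → ℝ) : ℝ≥0∞ :=
  ⨆ T ∈ Set.univ.pi 𝒮i, ENNReal.ofReal
    (⨍ z in Set.univ.pi T,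
      (f z - ⨆ i, essInf (fun w => f (Function.update z i w)) (volume.restrict (T i))))

/-- The BLO norm of `f` with respect to the basis `𝒮`. -/
def bloNorm {α : Type*} [MeasureSpace α] (𝒮 : Set (Set α)) (f : α → ℝ) : ℝ≥0∞ :=
  ⨆ S ∈ 𝒮, ENNReal.ofReal (⨍ z in S, (f z - essInf f (volume.restrict S)))

/-- The lower-dimensional `BLO_{𝒮ᵢ}(ℝⁿ)` norm: the supremum over `ẑᵢ` (encoded by a full
point `z`, whose `i`-th component is irrelevant) of the `BLO_{𝒮ᵢ}(ℝ^{nᵢ})` norm of the slice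
`f_{ẑᵢ}`. -/
def bloSliceNorm {k : ℕ} {n : Fin k → ℕ} (i : Fin k)
    (𝒮i : Set (Set (Fin (n i) → ℝ))) (f : (∀ j, Fin (n j) → ℝ) → ℝ) : ℝ≥0∞ :=
  ⨆ z : ∀ j, Fin (n j) → ℝ, bloNorm 𝒮i (fun w => f (Function.update z i w))

/-!
On a rectangle `T₁ × ⋯ × T_k`, the subtracted term `max_j essinf_{T_j} f_{ẑ_j}` is at least the
`i`-th one, so the integrand of the rectangular norm is dominated on each `i`-th slice by
`f_{ẑᵢ} − essinf_{Tᵢ} f_{ẑᵢ}`, whose average over `Tᵢ` is at most `‖f‖_{BLO_{𝒮ᵢ}(ℝⁿ)}`.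
Averaging these slice bounds over the remaining factors (Fubini) bounds the average over the
whole rectangle.
-/

namespace MeasureTheory

variable {α β : Type*} [MeasurableSpace α] [MeasurableSpace β]

-- The hypothesis `0 ≤ C` absorbs the junk value `0` of the average when `f` is not integrable
-- or `μ` is zero or infinite.
theorem average_le_of_forall_le {μ : Measure α} {f : α → ℝ} {C : ℝ} (hC : 0 ≤ C)
    (hf : ∀ x, f x ≤ C) : ⨍ x, f x ∂μ ≤ C := by
  rcases eq_or_ne μ 0 with rfl | hμ
  · simpa using hC
  by_cases hμfin : IsFiniteMeasure μ
  · by_cases hfi : Integrable f μ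
    · obtain ⟨x, hx⟩ := exists_average_le hμ hfi
      exact hx.trans (hf x)
    · simpa [average_eq, integral_undef hfi] using hC
  · simpa [average_eq, measureReal_def, not_isFiniteMeasure_iff.1 hμfin] using hC

theorem average_le_of_le_of_average_le {μ : Measure α} {f g : α → ℝ} (hg : Integrable g μ)
    (hfg : ∀ x, f x ≤ g x) {C : ℝ} (hC : 0 ≤ C) (hgC : ⨍ x, g x ∂μ ≤ C) :
    ⨍ x, f x ∂μ ≤ C := by
  by_cases hf : Integrable f μ
  · refine le_trans ?_ hgC
    simp only [average_eq, smul_eq_mul]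
    exact mul_le_mul_of_nonneg_left (integral_mono hf hg hfg) (by positivity)
  · simpa [average_eq, integral_undef hf] using hC

theorem MeasurePreserving.average_comp {μ : Measure α} {ν : Measure β} {e : α ≃ᵐ β}
    (he : MeasurePreserving e μ ν) (g : β → ℝ) : ⨍ x, g (e x) ∂μ = ⨍ y, g y ∂ν := by
  rw [average_eq, average_eq, he.integral_comp' g,
    ← he.measureReal_preimage MeasurableSet.univ.nullMeasurableSet, preimage_univ]

theorem average_prod_le_of_forall_average_le {μ : Measure α} {ν : Measure β} [SFinite μ]
    [SFinite ν] {F : α × β → ℝ} {C : ℝ} (hC : 0 ≤ C) (h : ∀ y, ⨍ x, F (x, y) ∂μ ≤ C) :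
    ⨍ p, F p ∂μ.prod ν ≤ C := by
  by_cases hF : Integrable F (μ.prod ν)
  · have hiter : ⨍ p, F p ∂μ.prod ν = ⨍ y, ⨍ x, F (x, y) ∂μ ∂ν := by
      simp only [average_eq, integral_prod_symm _ hF, integral_smul, smul_smul, ← univ_prod_univ,
        measureReal_prod_prod, mul_inv, mul_comm]
    exact hiter ▸ average_le_of_forall_le hC h
  · simpa [average_eq, integral_undef hF] using hC

theorem average_pi_le_of_forall_average_update_le {m : ℕ} {X : Fin (m + 1) → Type*}
    [∀ j, MeasurableSpace (X j)] (μ : ∀ j, Measure (X j)) [∀ j, SigmaFinite (μ j)]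
    (i : Fin (m + 1)) {F : (∀ j, X j) → ℝ} {C : ℝ} (hC : 0 ≤ C)
    (h : ∀ z, ⨍ w, F (Function.update z i w) ∂μ i ≤ C) : ⨍ z, F z ∂Measure.pi μ ≤ C := by
  have hsplit := (measurePreserving_piFinSuccAbove μ i).symm
  rw [← hsplit.average_comp]
  refine average_prod_le_of_forall_average_le hC fun y => ?_
  rcases isEmpty_or_nonempty (X i) with hX | ⟨⟨x₀⟩⟩
  · simpa [Measure.eq_zero_of_isEmpty (μ i)] using hC
  simpa [MeasurableEquiv.piFinSuccAbove_symm_apply, Fin.insertNthEquiv, Fin.update_insertNth] using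
    h (Fin.insertNth i x₀ y)

end MeasureTheory

section BLO

variable {k : ℕ} {n : Fin k → ℕ} {𝒮i : ∀ i, Set (Set (Fin (n i) → ℝ))}
  {f : (∀ j, Fin (n j) → ℝ) → ℝ}

theorem ofReal_setAverage_sub_essInf_le_bloSliceNorm {i : Fin k} (z : ∀ j, Fin (n j) → ℝ)
    {S : Set (Fin (n i) → ℝ)} (hS : S ∈ 𝒮i i) :
    ENNReal.ofReal (⨍ w in S, (f (Function.update z i w) -
      essInf (fun w => f (Function.update z i w)) (volume.restrict S))) ≤
      bloSliceNorm i (𝒮i i) f :=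
  le_iSup_of_le z (le_iSup₂_of_le S hS le_rfl)

theorem recBloNorm_le_bloSliceNorm (i : Fin k) (hfin : ∀ S ∈ 𝒮i i, volume S < ⊤)
    (hslice : ∀ (z : ∀ j, Fin (n j) → ℝ), ∀ S ∈ 𝒮i i,
      IntegrableOn (fun w => f (Function.update z i w)) S) :
    recBloNorm 𝒮i f ≤ bloSliceNorm i (𝒮i i) f := by
  obtain ⟨m, rfl⟩ : ∃ m, k = m + 1 := Nat.exists_eq_succ_of_ne_zero i.pos.ne'
  rcases eq_or_ne (bloSliceNorm i (𝒮i i) f) ⊤ with hM | hM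
  · exact hM ▸ le_top
  refine iSup₂_le fun T hT => (ENNReal.ofReal_le_iff_le_toReal hM).2 ?_
  rw [volume_pi, Measure.restrict_pi_pi]
  refine average_pi_le_of_forall_average_update_le _ i toReal_nonneg fun z => ?_
  have hTi : T i ∈ 𝒮i i := hT i trivial
  refine average_le_of_le_of_average_le
    ((hslice z _ hTi).sub (integrableOn_const (hfin _ hTi).ne)) (fun w => ?_) toReal_nonneg
    ((ENNReal.ofReal_le_iff_le_toReal hM).1 (ofReal_setAverage_sub_essInf_le_bloSliceNorm z hTi))
  refine sub_le_sub_left (le_ciSup_of_le (Set.finite_range _).bddAbove i ?_) _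
  simp only [Function.update_idem, le_refl]

end BLO

theorem lower_dim_blo_subset_rec_blo_general {k : ℕ} {n : Fin k → ℕ}
    (𝒮i : ∀ i, Set (Set (Fin (n i) → ℝ)))
    (h𝒮i : ∀ i, IsShapeBasis (𝒮i i))
    (f : (∀ j, Fin (n j) → ℝ) → ℝ)
    (hslice : ∀ (i : Fin k) (z : ∀ j, Fin (n j) → ℝ), ∀ Si ∈ 𝒮i i,
      IntegrableOn (fun w => f (Function.update z i w)) Si) :
    (∀ i, bloSliceNorm i (𝒮i i) f < ⊤ →
      recBloNorm 𝒮i f < ⊤ ∧ recBloNorm 𝒮i f ≤ bloSliceNorm i (𝒮i i) f) ∧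
    ((∃ i, bloSliceNorm i (𝒮i i) f < ⊤) →
      recBloNorm 𝒮i f ≤ ⨅ i, bloSliceNorm i (𝒮i i) f) := by
  have key : ∀ i, recBloNorm 𝒮i f ≤ bloSliceNorm i (𝒮i i) f := fun i =>
    recBloNorm_le_bloSliceNorm i (fun S hS => ((h𝒮i i).1 S hS).2.2) (hslice i)
  exact ⟨fun i hi => ⟨(key i).trans_lt hi, key i⟩, fun _ => le_iInf key⟩

/-- Write `ℝⁿ = ℝ^{n₁}×⋯×ℝ^{n_k}` and let `𝒮` have the strong decomposition
property with respect to bases `𝒮ᵢ` in `ℝ^{nᵢ}`. If `f ∈ BLO_{𝒮ᵢ}(ℝⁿ)` for some `i`, then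
`f ∈ BLO_{rec,𝒮}` with `‖f‖_{BLO_{rec,𝒮}} ≤ ‖f‖_{BLO_{𝒮ᵢ}(ℝⁿ)}`. Consequently, if
`f ∈ ⋃ᵢ BLO_{𝒮ᵢ}(ℝⁿ)`, then `‖f‖_{BLO_{rec,𝒮}} ≤ minᵢ ‖f‖_{BLO_{𝒮ᵢ}(ℝⁿ)}`. -/
theorem lower_dim_blo_subset_rec_blo {k : ℕ} {n : Fin k → ℕ} (hk : 2 ≤ k)
    (𝒮 : Set (Set (∀ j, Fin (n j) → ℝ))) (𝒮i : ∀ i, Set (Set (Fin (n i) → ℝ)))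
    (h𝒮 : IsShapeBasis 𝒮) (h𝒮i : ∀ i, IsShapeBasis (𝒮i i))
    (hstrong : StrongDecomposition 𝒮 𝒮i)
    (f : (∀ j, Fin (n j) → ℝ) → ℝ) (hfm : Measurable f)
    (hfi : ∀ S ∈ 𝒮, IntegrableOn f S)
    (hslice : ∀ (i : Fin k) (z : ∀ j, Fin (n j) → ℝ), ∀ Si ∈ 𝒮i i,
      IntegrableOn (fun w => f (Function.update z i w)) Si) :
    (∀ i, bloSliceNorm i (𝒮i i) f < ⊤ →
      recBloNorm 𝒮i f < ⊤ ∧ recBloNorm 𝒮i f ≤ bloSliceNorm i (𝒮i i) f) ∧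
    ((∃ i, bloSliceNorm i (𝒮i i) f < ⊤) →
      recBloNorm 𝒮i f ≤ ⨅ i, bloSliceNorm i (𝒮i i) f) :=
  lower_dim_blo_subset_rec_blo_general 𝒮i h𝒮i f hslice
end
end

section
/- Let h(x,y) = max(x,y) on ℝ×ℝ and let I_L = (0,L) for L > 0. Then ⨍_{I_L}⨍_{I_L} |h(x,y) − essinf_{y∈I_L} h(x,y) − essinf_{x∈I_L} h(x,y) + essinf_{I_L×I_L} h| dy dx = L/3, which tends to ∞ as L → ∞. In contrast, the corresponding quantity for f(x,y) = x and for g(x,y) = y equals 0 for all pairs of shapes S₁, S₂ ⊆ ℝ. (Hence the class defined by bounding sup over rectangles of ⨍⨍ |f − essinf_{S₂} f_x − essinf_{S₁} f_y + essinf_{S₁×S₂} f| is not an upper semilattice.) -/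
open MeasureTheory Set ENNReal

noncomputable section

/-- The quantity `⨍_{S₁}⨍_{S₂} |f(x,y) − essinf_{S₂} f_x − essinf_{S₁} f_y + essinf_{S₁×S₂} f|`. -/
def recLowerOsc (f : ℝ × ℝ → ℝ) (S₁ S₂ : Set ℝ) : ℝ :=
  ⨍ x in S₁, ⨍ y in S₂,
    |f (x, y) - essInf (fun y' => f (x, y')) (volume.restrict S₂)
      - essInf (fun x' => f (x', y)) (volume.restrict S₁)
      + essInf f (volume.restrict (S₁ ×ˢ S₂))|

/-! For `max`, at almost every point of the square the partial essential infima are `x` and `y`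
and the full one is `0`, so the integrand is `|max x y - x - y| = min x y`, whose average over
`(0, L)²` is `L / 3`. For a function of `x` alone, the partial infimum in `y` is the function
itself and the infimum over the rectangle equals the one in `x`, so the integrand vanishes. -/

section EssInf

variable {α β : Type*} [MeasurableSpace α] [ConditionallyCompleteLinearOrder β]
  {μ : Measure α}

lemma essInf_eq_of_forall_lt_measure_ne_zero {f : α → β} {c : β}
    (h_le : ∀ᵐ x ∂μ, c ≤ f x) (h_pos : ∀ a, c < a → μ {x | f x < a} ≠ 0) :
    essInf f μ = c := by
  have hc : c ∈ {a | μ {x | f x < a} = 0} := by simpa [ae_iff, not_le] using h_le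
  have hub : c ∈ upperBounds {a | μ {x | f x < a} = 0} := fun a ha =>
    not_lt.mp fun hca => h_pos a hca ha
  rw [essInf_eq_sSup]
  exact le_antisymm (csSup_le ⟨c, hc⟩ hub) (le_csSup ⟨c, hub⟩ hc)

lemma IsOpen.essInf_restrict_eq_of_isGLB [TopologicalSpace α] [OpensMeasurableSpace α]
    [μ.IsOpenPosMeasure] [TopologicalSpace β] [OrderTopology β] {s : Set α} (hs : IsOpen s)
    {f : α → β} (hf : ContinuousOn f s) {c : β} (hc : IsGLB (f '' s) c) :
    essInf f (μ.restrict s) = c := by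
  refine essInf_eq_of_forall_lt_measure_ne_zero
    (ae_restrict_of_forall_mem hs.measurableSet fun x hx => hc.1 (mem_image_of_mem f hx))
    fun a hca => ?_
  obtain ⟨_, ⟨x, hx, rfl⟩, -, hxa⟩ := hc.exists_between hca
  rw [Measure.restrict_apply' hs.measurableSet, inter_comm]
  exact (hf.isOpen_inter_preimage hs isOpen_Iio).measure_ne_zero μ ⟨x, hx, hxa⟩

variable {γ : Type*} [MeasurableSpace γ] {ν : Measure γ}

lemma essInf_comp_fst_prod [SFinite ν] (hν : ν ≠ 0) (f : α → β) :
    essInf (fun z : α × γ => f z.1) (μ.prod ν) = essInf f μ := by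
  simp only [essInf_eq_sSup]
  congr with a
  change μ.prod ν (Prod.fst ⁻¹' {x | f x < a}) = 0 ↔ _
  rw [← prod_univ, Measure.prod_prod, mul_eq_zero, Measure.measure_univ_eq_zero]
  simp [hν]

lemma essInf_comp_snd_prod [SFinite ν] (hμ : μ ≠ 0) (f : γ → β) :
    essInf (fun z : α × γ => f z.2) (μ.prod ν) = essInf f ν := by
  simp only [essInf_eq_sSup]
  congr with a
  change μ.prod ν (Prod.snd ⁻¹' {y | f y < a}) = 0 ↔ _
  rw [← univ_prod, Measure.prod_prod, mul_eq_zero, Measure.measure_univ_eq_zero]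
  simp [hμ]

end EssInf

lemma recLowerOsc_comp_fst (φ : ℝ → ℝ) {S₁ S₂ : Set ℝ} (h₂ : volume S₂ ≠ 0) :
    recLowerOsc (fun z => φ z.1) S₁ S₂ = 0 := by
  have h₂' : volume.restrict S₂ ≠ 0 := mt Measure.restrict_eq_zero.1 h₂
  rw [recLowerOsc, Measure.volume_eq_prod, ← Measure.prod_restrict, essInf_comp_fst_prod h₂']
  simp [essInf_const _ h₂']

lemma recLowerOsc_comp_snd (φ : ℝ → ℝ) {S₁ S₂ : Set ℝ} (h₁ : volume S₁ ≠ 0) :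
    recLowerOsc (fun z => φ z.2) S₁ S₂ = 0 := by
  have h₁' : volume.restrict S₁ ≠ 0 := mt Measure.restrict_eq_zero.1 h₁
  rw [recLowerOsc, Measure.volume_eq_prod, ← Measure.prod_restrict, essInf_comp_snd_prod h₁']
  simp [essInf_const _ h₁']

lemma essInf_max_left_restrict {s : Set ℝ} (hs : IsOpen s) {x : ℝ} (hx : x ∈ s) :
    essInf (fun y => max x y) (volume.restrict s) = x :=
  hs.essInf_restrict_eq_of_isGLB (continuous_const.max continuous_id).continuousOn
    (IsLeast.isGLB ⟨⟨x, hx, max_self x⟩, forall_mem_image.2 fun _ _ => le_max_left _ _⟩)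

lemma essInf_max_right_restrict {s : Set ℝ} (hs : IsOpen s) {y : ℝ} (hy : y ∈ s) :
    essInf (fun x => max x y) (volume.restrict s) = y := by
  simpa only [max_comm] using essInf_max_left_restrict hs hy

lemma essInf_max_restrict_prod_self {s : Set ℝ} (hs : IsOpen s) {c : ℝ} (hc : IsGLB s c) :
    essInf (fun z : ℝ × ℝ => max z.1 z.2) (volume.restrict (s ×ˢ s)) = c := by
  refine (hs.prod hs).essInf_restrict_eq_of_isGLB
    (continuous_fst.max continuous_snd).continuousOn (hc.of_subset_of_superset isGLB_Ici ?_ ?_)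
  · exact fun y hy => ⟨(y, y), ⟨hy, hy⟩, max_self y⟩
  · exact forall_mem_image.2 fun z hz => (hc.1 hz.1).trans (le_max_left _ _)

lemma setAverage_Ioo_eq_div {a b : ℝ} (hab : a ≤ b) (f : ℝ → ℝ) :
    ⨍ x in Ioo a b, f x = (∫ x in a..b, f x) / (b - a) := by
  rw [← interval_average_eq_div, uIoc_of_le hab, Measure.restrict_congr_set Ioo_ae_eq_Ioc]

lemma integral_min_const_left {L x : ℝ} (hx : x ∈ Icc 0 L) :
    ∫ y in (0 : ℝ)..L, min x y = x * L - x ^ 2 / 2 := by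
  have hint : ∀ a b : ℝ, IntervalIntegrable (fun y => min x y) volume a b :=
    fun a b => (continuous_const.min continuous_id).intervalIntegrable a b
  rw [← intervalIntegral.integral_add_adjacent_intervals (hint 0 x) (hint x L),
    intervalIntegral.integral_congr (g := fun y => y) fun y hy => min_eq_right ?_,
    intervalIntegral.integral_congr (g := fun _ => x) fun y hy => min_eq_left ?_,
    integral_id, intervalIntegral.integral_const, smul_eq_mul]
  · ring
  · exact (uIcc_of_le hx.2 ▸ hy).1
  · exact (uIcc_of_le hx.1 ▸ hy).2

lemma recLowerOsc_max_Ioo {L : ℝ} (hL : 0 < L) :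
    recLowerOsc (fun z => max z.1 z.2) (Ioo 0 L) (Ioo 0 L) = L / 3 := by
  have hinner : ∀ x ∈ Ioo 0 L,
      ⨍ y in Ioo 0 L, |max x y - essInf (fun y' => max x y') (volume.restrict (Ioo 0 L))
        - essInf (fun x' => max x' y) (volume.restrict (Ioo 0 L)) + 0|
        = (x * L - x ^ 2 / 2) / L := by
    intro x hx
    have hmin : ∀ y ∈ Ioo 0 L, |max x y - x - essInf (fun x' => max x' y)
        (volume.restrict (Ioo 0 L)) + 0| = min x y := fun y hy => by
      rw [essInf_max_right_restrict isOpen_Ioo hy, ← abs_of_pos (lt_min hx.1 hy.1), ← abs_neg]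
      congr 1
      linarith [max_add_min x y]
    rw [essInf_max_left_restrict isOpen_Ioo hx,
      setAverage_congr_fun measurableSet_Ioo (ae_of_all _ hmin), setAverage_Ioo_eq_div hL.le,
      integral_min_const_left (Ioo_subset_Icc_self hx), sub_zero]
  rw [recLowerOsc, essInf_max_restrict_prod_self isOpen_Ioo (isGLB_Ioo hL),
    setAverage_congr_fun measurableSet_Ioo (ae_of_all _ hinner), setAverage_Ioo_eq_div hL.le,
    intervalIntegral.integral_div, intervalIntegral.integral_sub,
    intervalIntegral.integral_mul_const, integral_id, intervalIntegral.integral_div, integral_pow]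
  · field_simp [hL.ne']
    ring
  all_goals exact Continuous.intervalIntegrable (by fun_prop) _ _

/-- For `h(x,y) = max(x,y)` and `I_L = (0,L)`, the quantity
`⨍_{I_L}⨍_{I_L} |h − essinf_{I_L} h_x − essinf_{I_L} h_y + essinf_{I_L×I_L} h|` equals
`L/3`, which tends to `∞` as `L → ∞`; in contrast, the corresponding quantity for
`f(x,y) = x` and `g(x,y) = y` vanishes for all pairs of shapes. (Hence this naive
rectangular BLO class is not an upper semilattice.) -/
theorem naive_rec_blo_not_semilattice :
    (∀ L : ℝ, 0 < L →
      recLowerOsc (fun z => max z.1 z.2) (Ioo 0 L) (Ioo 0 L) = L / 3) ∧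
    (∀ S₁ S₂ : Set ℝ, IsShape S₁ → IsShape S₂ →
      recLowerOsc (fun z => z.1) S₁ S₂ = 0 ∧ recLowerOsc (fun z => z.2) S₁ S₂ = 0) :=
  ⟨fun _ => recLowerOsc_max_Ioo, fun _ _ h₁ h₂ =>
    ⟨recLowerOsc_comp_fst id h₂.2.1.ne', recLowerOsc_comp_snd id h₁.2.1.ne'⟩⟩
end
end

section
/- The basis ℛ of open axis-parallel rectangles in ℝ² is not an engulfing basis. More precisely: for any c_d > 1 and any assignment R ↦ R̃ of rectangles satisfying R̃ ⊇ R and |R̃| ≤ c_d|R|, and for any c_e > 1, there exist rectangles R₁ = (0,1)×(0,H) and R₂ = (0,H)×(0,1) with H sufficiently large such that R₁ ∩ R₂ ≠ ∅ and R₂ ∩ (R̃₁)ᶜ ≠ ∅, yet every rectangle containing R̃₁ ∪ R₂ must contain (0,H)×(0,H) and hence has measure at least H² > c_e|R₂|. -/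
open MeasureTheory Set ENNReal

noncomputable section

/-- An (axis-parallel, open) rectangle in `ℝ²`: a product of two finite open intervals. -/
def IsRect (S : Set (ℝ × ℝ)) : Prop :=
  ∃ a b c d : ℝ, a < b ∧ c < d ∧ S = Ioo a b ×ˢ Ioo c d

/-- The basis `ℛ` of open axis-parallel rectangles in `ℝ²` is not an
engulfing basis: for any `c_d > 1`, any assignment `R ↦ R̃` of rectangles with `R̃ ⊇ R` and
`|R̃| ≤ c_d|R|`, and any `c_e > 1`, there is `H` (sufficiently large) such that
`R₁ = (0,1)×(0,H)` and `R₂ = (0,H)×(0,1)` satisfy `R₁ ∩ R₂ ≠ ∅` and `R₂ ∩ (R̃₁)ᶜ ≠ ∅`, yet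
every rectangle containing `R̃₁ ∪ R₂` contains `(0,H)×(0,H)`, hence has measure at least
`H² > c_e|R₂|`. -/
theorem rectangles_not_engulfing (cd ce : ℝ) (hcd : 1 < cd) (hce : 1 < ce)
    (tl : Set (ℝ × ℝ) → Set (ℝ × ℝ))
    (htl : ∀ S, IsRect S →
      IsRect (tl S) ∧ S ⊆ tl S ∧ volume (tl S) ≤ ENNReal.ofReal cd * volume S) :
    ∃ H : ℝ, 1 < H ∧
      ((Ioo (0:ℝ) 1 ×ˢ Ioo (0:ℝ) H) ∩ (Ioo (0:ℝ) H ×ˢ Ioo (0:ℝ) 1)).Nonempty ∧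
      ((Ioo (0:ℝ) H ×ˢ Ioo (0:ℝ) 1) ∩ (tl (Ioo (0:ℝ) 1 ×ˢ Ioo (0:ℝ) H))ᶜ).Nonempty ∧
      ∀ T : Set (ℝ × ℝ), IsRect T →
        tl (Ioo (0:ℝ) 1 ×ˢ Ioo (0:ℝ) H) ∪ (Ioo (0:ℝ) H ×ˢ Ioo (0:ℝ) 1) ⊆ T →
          Ioo (0:ℝ) H ×ˢ Ioo (0:ℝ) H ⊆ T ∧
          ENNReal.ofReal (H ^ 2) ≤ volume T ∧
          ENNReal.ofReal ce * volume (Ioo (0:ℝ) H ×ˢ Ioo (0:ℝ) 1) <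
            ENNReal.ofReal (H ^ 2) := by
  classical
  set H : ℝ := cd + ce + 2 with hHdef
  have hH1 : (1:ℝ) < H := by simp only [hHdef]; linarith
  have hH0 : (0:ℝ) < H := by linarith
  have hcdH : cd < H := by simp only [hHdef]; linarith
  have hceH : ce < H := by simp only [hHdef]; linarith
  obtain ⟨hrect, hsub, hvol⟩ := htl (Ioo 0 1 ×ˢ Ioo 0 H)
    ⟨0, 1, 0, H, one_pos, hH0, rfl⟩
  obtain ⟨a, b, c, d, hab, hcd', heq⟩ := hrect
  have hx : Ioo (0:ℝ) 1 ⊆ Ioo a b := by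
    intro x hx
    have := hsub (Set.mk_mem_prod (a := x) (b := H/2) hx ⟨half_pos hH0, half_lt_self hH0⟩)
    rw [heq] at this
    exact this.1
  have hy : Ioo (0:ℝ) H ⊆ Ioo c d := by
    intro y hy
    have := hsub (Set.mk_mem_prod (a := (1:ℝ)/2) (b := y) ⟨by norm_num, by norm_num⟩ hy)
    rw [heq] at this
    exact this.2
  have hx' := (Set.Ioo_subset_Ioo_iff one_pos).1 hx
  have hy' := (Set.Ioo_subset_Ioo_iff hH0).1 hy
  have hvol1 : volume (Ioo (0:ℝ) 1 ×ˢ Ioo (0:ℝ) H) = ENNReal.ofReal H := by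
    simp [Measure.volume_eq_prod, Measure.prod_prod, Real.volume_Ioo]
  have hvolab : volume (Ioo a b ×ˢ Ioo c d) = ENNReal.ofReal ((b - a) * (d - c)) := by
    simp [Measure.volume_eq_prod, Measure.prod_prod, Real.volume_Ioo,
      ENNReal.ofReal_mul (le_of_lt (sub_pos.2 hab))]
  have hvolR : (b - a) * (d - c) ≤ cd * H := by
    rw [heq, hvolab, hvol1, ← ENNReal.ofReal_mul (by linarith)] at hvol
    exact (ENNReal.ofReal_le_ofReal_iff (by nlinarith)).1 hvol
  have hba : b - a ≤ cd := by nlinarith [hy'.1, hy'.2, hx'.1, hx'.2]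
  have hb : b ≤ cd := by linarith [hx'.1]
  refine ⟨H, hH1, ⟨(1/2, 1/2), ?_⟩, ⟨((cd + H)/2, 1/2), ?_, ?_⟩, ?_⟩
  · constructor <;> constructor <;> constructor <;> norm_num <;> linarith
  · constructor
    · constructor <;> [linarith; linarith]
    · norm_num
  · rw [heq]
    intro hmem
    have := hmem.1.2
    linarith
  · intro T hT hTsub
    obtain ⟨p, q, r, s, hpq, hrs, rfl⟩ := hT
    have hT1 : Ioo (0:ℝ) 1 ×ˢ Ioo (0:ℝ) H ⊆ Ioo p q ×ˢ Ioo r s :=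
      hsub.trans (Set.subset_union_left.trans hTsub)
    have hT2 : Ioo (0:ℝ) H ×ˢ Ioo (0:ℝ) 1 ⊆ Ioo p q ×ˢ Ioo r s :=
      Set.subset_union_right.trans hTsub
    have hq : Ioo (0:ℝ) H ⊆ Ioo p q := by
      intro x hx
      exact (hT2 (Set.mk_mem_prod (b := (1:ℝ)/2) hx ⟨by norm_num, by norm_num⟩)).1
    have hs : Ioo (0:ℝ) H ⊆ Ioo r s := by
      intro y hy
      exact (hT1 (Set.mk_mem_prod (a := (1:ℝ)/2) ⟨by norm_num, by norm_num⟩ hy)).2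
    have hsq : Ioo (0:ℝ) H ×ˢ Ioo (0:ℝ) H ⊆ Ioo p q ×ˢ Ioo r s :=
      Set.prod_mono hq hs
    refine ⟨hsq, ?_, ?_⟩
    · calc ENNReal.ofReal (H ^ 2) = volume (Ioo (0:ℝ) H ×ˢ Ioo (0:ℝ) H) := by
            simp [Measure.volume_eq_prod, Measure.prod_prod, Real.volume_Ioo,
              ← ENNReal.ofReal_mul hH0.le, sq]
        _ ≤ _ := measure_mono hsq
    · have : volume (Ioo (0:ℝ) H ×ˢ Ioo (0:ℝ) 1) = ENNReal.ofReal H := by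
        simp [Measure.volume_eq_prod, Measure.prod_prod, Real.volume_Ioo]
      rw [this, ← ENNReal.ofReal_mul (by linarith)]
      exact ENNReal.ofReal_lt_ofReal_iff (by nlinarith) |>.2 (by nlinarith)
end
end
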